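/- Let W be a vector space over ℂ. Every pseudo-local subset U of ℰ(W) is quasi compatible, i.e., every finite ordered sequence of elements of U is quasi compatible. -/

import Mathlib

noncomputable section

open Classical

namespace NVA

/-! ### The space ℰ(W) = Hom(W, W((x))), coefficient-indexed by modes:
`a w n` is the mode `a_n` applied to `w`, where `a(x)w = ∑ (a_n w) x^{-n-1}`.
Lower truncation of `a(x)w` in powers of `x` means `a_n w = 0` for `n` large. -/

variable (W : Type*) [AddCommGroup W] [Module ℂ W]

/-- `ℰ(W) = Hom(W, W((x)))` as a submodule of `Hom(W, W[[x^{±1}]])`. -/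
def EWsub : Submodule ℂ (W →ₗ[ℂ] (ℤ → W)) where
  carrier := {a | ∀ w : W, ∃ N : ℤ, ∀ n : ℤ, N ≤ n → a w n = 0}
  add_mem' := by
    intro a b ha hb w
    obtain ⟨N, hN⟩ := ha w
    obtain ⟨M, hM⟩ := hb w
    refine ⟨max N M, fun n hn => ?_⟩
    simp only [LinearMap.add_apply, Pi.add_apply,
      hN n (le_trans (le_max_left _ _) hn), hM n (le_trans (le_max_right _ _) hn), add_zero]
  zero_mem' := by intro w; exact ⟨0, fun n _ => rfl⟩
  smul_mem' := by
    intro c a ha w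
    obtain ⟨N, hN⟩ := ha w
    exact ⟨N, fun n hn => by
      simp only [LinearMap.smul_apply, Pi.smul_apply, hN n hn, smul_zero]⟩

/-- The type `ℰ(W)`. -/
abbrev EW := ↥(EWsub W)

variable {W}

/-- The mode function of an element of `ℰ(W)`. -/
def mf (a : EW W) : W → ℤ → W := fun w n => (a : W →ₗ[ℂ] (ℤ → W)) w n

/-- The identity operator `1_W`, as an element of `ℰ(W)`. -/
def oneE : EW W :=
  ⟨{ toFun := fun w n => if n = -1 then w else 0
     map_add' := by
       intro w w'; funext n; by_cases h : n = -1 <;> simp [h]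
     map_smul' := by
       intro c w; funext n; by_cases h : n = -1 <;> simp [h] },
   fun w => ⟨0, fun n hn => if_neg (by omega)⟩⟩

/-- The generalized binomial coefficient `C(m, j)` for `m ∈ ℤ`, as a complex number. -/
def binom (m : ℤ) (j : ℕ) : ℂ :=
  (∏ i ∈ Finset.range j, ((m : ℂ) - (i : ℂ))) / (j.factorial : ℂ)

/-- The coefficient of `x₁^m x₂^t` in `a(x₁) b(x₂) w`. -/
def Fab (a b : EW W) (w : W) (m t : ℤ) : W := mf a (mf b w (-t - 1)) (-m - 1)

/-- Multiplication of a two-variable family by a polynomial `p(x₁,x₂)`. -/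
def mulPoly (p : MvPolynomial (Fin 2) ℂ) (F : ℤ → ℤ → W) : ℤ → ℤ → W :=
  fun m t => ∑ d ∈ p.support, MvPolynomial.coeff d p • F (m - d 0) (t - d 1)

/-- A two-variable family lies in `W((x₁,x₂))` (jointly lower truncated). -/
def IsLaurent2 (F : ℤ → ℤ → W) : Prop :=
  ∃ N : ℤ, ∀ m t : ℤ, (m < N ∨ t < N) → F m t = 0

/-- Quasi compatibility of an ordered pair `(a(x), b(x))` in `ℰ(W)`:
`p(x₁,x₂) a(x₁) b(x₂) ∈ Hom(W, W((x₁,x₂)))` for some nonzero polynomial `p`. -/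
def QCPair (a b : EW W) : Prop :=
  ∃ p : MvPolynomial (Fin 2) ℂ, p ≠ 0 ∧ ∀ w, IsLaurent2 (mulPoly p (Fab a b w))

/-! ### Sequences -/

/-- The coefficient of `x₁^{k 1} ⋯ x_r^{k r}` in `ψ₁(x₁) ⋯ ψ_r(x_r) w`. -/
def seqCoeff : {r : ℕ} → (Fin r → EW W) → W → (Fin r → ℤ) → W
  | 0, _, w, _ => w
  | _ + 1, ψ, w, k => mf (ψ 0) (seqCoeff (Fin.tail ψ) w (Fin.tail k)) (-(k 0) - 1)

/-- The polynomial `∏_{1 ≤ i < j ≤ r} p(x_i, x_j)`. -/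
def pairPoly (p : MvPolynomial (Fin 2) ℂ) (r : ℕ) : MvPolynomial (Fin r) ℂ :=
  ∏ ij ∈ Finset.univ.filter (fun ij : Fin r × Fin r => ij.1 < ij.2),
    MvPolynomial.rename ![ij.1, ij.2] p

/-- Multiplication of an `r`-variable family by a polynomial in `r` variables. -/
def mulPolyN {r : ℕ} (P : MvPolynomial (Fin r) ℂ) (F : (Fin r → ℤ) → W) :
    (Fin r → ℤ) → W :=
  fun k => ∑ d ∈ P.support, MvPolynomial.coeff d P • F (fun i => k i - d i)

/-- An `r`-variable family lies in `W((x₁,…,x_r))`. -/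
def IsLaurentN {r : ℕ} (F : (Fin r → ℤ) → W) : Prop :=
  ∃ N : ℤ, ∀ k : Fin r → ℤ, (∃ i, k i < N) → F k = 0

/-- Quasi compatibility of an ordered sequence in `ℰ(W)`. -/
def QCSeq {r : ℕ} (ψ : Fin r → EW W) : Prop :=
  ∃ p : MvPolynomial (Fin 2) ℂ, p ≠ 0 ∧
    ∀ w, IsLaurentN (mulPolyN (pairPoly p r) (seqCoeff ψ w))

/-- Quasi compatibility of a subset of `ℰ(W)`. -/
def QCSet (S : Set (EW W)) : Prop :=
  ∀ (r : ℕ) (ψ : Fin r → EW W), (∀ i, ψ i ∈ S) → QCSeq ψ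

/-! ### The vertex operation `Y_ℰ^{(α)}` -/

/-- `ℂ((x))`. -/
abbrev LC : Type := LaurentSeries ℂ

/-- An iterated Laurent series field, e.g. `ℂ((x))((x₀))` (outer variable the second one). -/
abbrev K2 : Type := HahnSeries ℤ LC

/-- The outer variable of `K2`. -/
def xOuter : K2 := HahnSeries.single 1 1

/-- The inner variable of `K2`. -/
def xInner : K2 := HahnSeries.single 0 (HahnSeries.single 1 1)

/-- `α` times the inner variable of `K2`. -/
def xInnerC (c : ℂ) : K2 := HahnSeries.single 0 (HahnSeries.single 1 c)

/-- The polynomial `p(x₀ + α x, x)` as an element of `ℂ((x))((x₀))`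
(outer variable `x₀`). -/
def qK (p : MvPolynomial (Fin 2) ℂ) (α : ℂ) : K2 :=
  MvPolynomial.aeval ![xOuter + xInnerC α, xInner] p

/-- The expansion `ι_{x,x₀} (p(x₀ + α x, x)^{-1}) ∈ ℂ((x))((x₀))`. -/
def qInv (p : MvPolynomial (Fin 2) ℂ) (α : ℂ) : K2 := (qK p α)⁻¹

/-- The coefficient of `x₀^j x^t` in `(p(x₁,x) a(x₁) b(x) w)|_{x₁ = αx + x₀}`,
expanding via `(αx+x₀)^m = ∑_{j≥0} C(m,j) α^{m-j} x^{m-j} x₀^j`. -/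
def substYE (α : ℂ) (p : MvPolynomial (Fin 2) ℂ) (a b : EW W) (w : W)
    (j : ℕ) (t : ℤ) : W :=
  ∑ᶠ m : ℤ, (binom m j * α ^ (m - (j : ℤ))) • mulPoly p (Fab a b w) m (t - m + j)

/-- The coefficient of `x₀^J x^T` in
`ι_{x,x₀}(p(x₀+αx,x)^{-1}) ⬝ (p(x₁,x)a(x₁)b(x)w)|_{x₁ = αx+x₀}`. -/
def fullYE (α : ℂ) (p : MvPolynomial (Fin 2) ℂ) (a b : EW W) (w : W)
    (J T : ℤ) : W :=
  ∑ᶠ s : ℤ × ℤ, (((qInv p α).coeff s.1).coeff s.2) •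
    (if 0 ≤ J - s.1 then substYE α p a b w (J - s.1).toNat (T - s.2) else 0)

/-- The raw mode family of `Y_ℰ^{(α)}(a(x), x₀) b(x)`; `rawYE α a b n w m` is the mode
`m` of the element `a(x)_{(α,n)} b(x)` applied to `w`.  (Defined using a choice of
polynomial from quasi compatibility; by the general theory the value does not depend
on the choice.) -/
def rawYE (α : ℂ) (a b : EW W) (n : ℤ) (w : W) (m : ℤ) : W :=
  if h : QCPair a b then fullYE α h.choose a b w (-n - 1) (-m - 1) else 0

/-- `a(x)_{(α,n)} b(x)`, as an element of `ℰ(W)` whenever the raw family is realized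
by one (which is the case for any quasi compatible pair). -/
def YEa (α : ℂˣ) (a b : EW W) (n : ℤ) : EW W :=
  if h : ∃ c : EW W, ∀ w m, mf c w m = rawYE (α : ℂ) a b n w m then h.choose else 0

/-- `a(x)_n b(x) = a(x)_{(1,n)} b(x)`. -/
def YE (a b : EW W) (n : ℤ) : EW W := YEa 1 a b n

end NVA

namespace NVA

variable {W : Type*} [AddCommGroup W] [Module ℂ W]

/-- Submodules of `ℰ(W)` are `ℂ`-vector spaces (registered explicitly to assist
instance resolution). -/
noncomputable instance (V : Submodule ℂ (EW W)) : AddCommGroup ↥V :=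
  @Submodule.addCommGroup ℂ (EW W) _ inferInstance inferInstance V

noncomputable instance (V : Submodule ℂ (EW W)) : Module ℂ ↥V :=
  @Submodule.module ℂ (EW W) _ inferInstance inferInstance V

/-! ### Derivative and scaling operators on ℰ(W) -/

/-- `D = d/dx` on `ℰ(W)`: `(Da)_m = -m • a_{m-1}`. -/
def Dop (a : EW W) : EW W :=
  ⟨{ toFun := fun w m => (-m : ℂ) • mf a w (m - 1)
     map_add' := by intro w w'; funext m; simp [mf, map_add]
     map_smul' := by
       intro c w; funext m
       simp only [mf, map_smul, Pi.smul_apply, RingHom.id_apply]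
       exact smul_comm _ _ _ },
   by
     intro w
     obtain ⟨N, hN⟩ := a.2 w
     exact ⟨N + 1, fun m hm => by
       have : (a : W →ₗ[ℂ] (ℤ → W)) w (m - 1) = 0 := hN _ (by omega)
       simp [mf, this]⟩⟩

/-- `R_α : a(x) ↦ a(αx)`, on modes `(R_α a)_m = α^{-m-1} a_m`. -/
def RaE (α : ℂˣ) (a : EW W) : EW W :=
  ⟨{ toFun := fun w m => ((α : ℂ) ^ (-m - 1 : ℤ)) • mf a w m
     map_add' := by intro w w'; funext m; simp [mf, map_add]
     map_smul' := by
       intro c w; funext m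
       simp only [mf, map_smul, Pi.smul_apply, RingHom.id_apply]
       exact smul_comm _ _ _ },
   by
     intro w
     obtain ⟨N, hN⟩ := a.2 w
     exact ⟨N, fun m hm => by simp [mf, hN m hm]⟩⟩

/-! ### Nonlocal vertex algebras, modules and quasi modules -/

/-- The coefficient of `x₀^a x₂^b` in `Y₁(u, x₀+x₂) (Y₂(v,x₂) w)`, where
`(x₀+x₂)^m` is expanded in nonnegative powers of `x₂`. -/
def prodCE {V : Type*} (Yo Yi : V → W → ℤ → W) (u v : V) (w : W) (a b : ℤ) : W :=
  ∑ᶠ m : ℤ, if a ≤ m then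
    binom m (m - a).toNat • Yo u (Yi v w (-(b - (m - a)) - 1)) (-m - 1) else 0

/-- The coefficient of `x₀^a x₂^b` in `Y₂(Y₁(u,x₀)v, x₂) w`. -/
def assocCE {V : Type*} (Y1 : V → V → ℤ → V) (Y2 : V → W → ℤ → W)
    (u v : V) (w : W) (a b : ℤ) : W :=
  Y2 (Y1 u v (-a - 1)) w (-b - 1)

/-- Multiplication of a two-variable family (in `x₀, x₂`) by `f(x₀+x₂, x₂)` for a
polynomial `f`, expanding `(x₀+x₂)^d` in nonnegative powers of `x₂`. -/
def mulSubPoly (f : MvPolynomial (Fin 2) ℂ) (A : ℤ → ℤ → W) (a b : ℤ) : W :=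
  ∑ d ∈ f.support, ∑ i ∈ Finset.range (d 0 + 1),
    (MvPolynomial.coeff d f * ((d 0).choose i : ℂ)) •
      A (a - ((d 0 : ℤ) - i)) (b - i - (d 1 : ℤ))

/-- A nonlocal vertex algebra structure on a ℂ-vector space `V`:
a linear map `Y : V → ℰ(V) = Hom(V, V((x)))` and a vacuum vector `1` such that
`Y(1,x)v = v`, `Y(v,x)1 ∈ V[[x]]` with constant term `v`, and weak associativity
holds. -/
structure NLVA (V : Type*) [AddCommGroup V] [Module ℂ V] where
  Y : V →ₗ[ℂ] EW V
  one : V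
  vac : ∀ (v : V) (n : ℤ), mf (Y one) v n = if n = -1 then v else 0
  creation0 : ∀ (v : V) (n : ℤ), 0 ≤ n → mf (Y v) one n = 0
  creation1 : ∀ v : V, mf (Y v) one (-1) = v
  wassoc : ∀ u v w : V, ∃ l : ℕ, ∀ a b : ℤ,
    mulSubPoly (MvPolynomial.X 0 ^ l)
      (prodCE (fun x => mf (Y x)) (fun x => mf (Y x)) u v w) a b =
    mulSubPoly (MvPolynomial.X 0 ^ l)
      (assocCE (fun x y n => mf (Y x) y n) (fun x => mf (Y x)) u v w) a b

/-- The mode maps of a nonlocal vertex algebra: `Yf A u v n = u_n v`. -/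
def Yf {V : Type*} [AddCommGroup V] [Module ℂ V] (A : NLVA V) : V → V → ℤ → V :=
  fun u v n => mf (A.Y u) v n

/-- Mode maps of a linear map `V → ℰ(W)`. -/
def YWf {V : Type*} [AddCommGroup V] [Module ℂ V] (YW : V →ₗ[ℂ] EW W) :
    V → W → ℤ → W := fun v w n => mf (YW v) w n

/-- `(W, Y_W)` is a quasi module for the nonlocal vertex algebra `A` on `V`. -/
def IsQuasiModule {V : Type*} [AddCommGroup V] [Module ℂ V] (A : NLVA V)
    (YW : V →ₗ[ℂ] EW W) : Prop :=
  (∀ (w : W) (n : ℤ), mf (YW A.one) w n = if n = -1 then w else 0) ∧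
  ∀ (u v : V) (w : W), ∃ f : MvPolynomial (Fin 2) ℂ, f ≠ 0 ∧ ∀ a b : ℤ,
    mulSubPoly f (prodCE (YWf YW) (YWf YW) u v w) a b =
    mulSubPoly f (assocCE (Yf A) (YWf YW) u v w) a b

/-- `(W, Y_W)` is a module for the nonlocal vertex algebra `A` on `V`. -/
def IsModule {V : Type*} [AddCommGroup V] [Module ℂ V] (A : NLVA V)
    (YW : V →ₗ[ℂ] EW W) : Prop :=
  (∀ (w : W) (n : ℤ), mf (YW A.one) w n = if n = -1 then w else 0) ∧
  ∀ (u v : V) (w : W), ∃ l : ℕ, ∀ a b : ℤ,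
    mulSubPoly (MvPolynomial.X 0 ^ l) (prodCE (YWf YW) (YWf YW) u v w) a b =
    mulSubPoly (MvPolynomial.X 0 ^ l) (assocCE (Yf A) (YWf YW) u v w) a b

end NVA

namespace NVA

variable {W : Type*} [AddCommGroup W] [Module ℂ W]
variable {V : Type*} [AddCommGroup V] [Module ℂ V]

/-! ### Pseudo-locality -/

/-- A power series `∑ f n x^n` as a Laurent series. -/
def psN (f : ℕ → ℂ) : LC := HahnSeries.ofPowerSeries ℤ ℂ (PowerSeries.mk f)

/-- `ι_{x₂,x₁}` of a formal power series `F(x₁,x₂) ∈ ℂ[[x₁,x₂]]`, given by its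
coefficient function, as an element of `ℂ((x₂))((x₁))` (outer variable `x₁`). -/
def psEmbed (F : ℕ → ℕ → ℂ) : K2 :=
  HahnSeries.ofPowerSeries ℤ LC (PowerSeries.mk (fun m => psN (F m)))

/-- The coefficient function of a polynomial in two variables. -/
def polyCoeffFun (g : MvPolynomial (Fin 2) ℂ) : ℕ → ℕ → ℂ :=
  fun m t => MvPolynomial.coeff (Finsupp.single 0 m + Finsupp.single 1 t) g

/-- `ι_{x₂,x₁}` of a polynomial in two variables. -/
def polyEmbed (g : MvPolynomial (Fin 2) ℂ) : K2 := psEmbed (polyCoeffFun g)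

/-- The coefficient function of an element of `ℂ((x₂))((x₁))`:
`k2Fun x m t` is the coefficient of `x₁^m x₂^t`. -/
def k2Fun (x : K2) : ℤ → ℤ → ℂ := fun m t => (x.coeff m).coeff t

/-- Multiplication of a two-variable family by a scalar-valued two-variable series. -/
def smulFam (c : ℤ → ℤ → ℂ) (G : ℤ → ℤ → W) : ℤ → ℤ → W :=
  fun m t => ∑ᶠ s : ℤ × ℤ, c s.1 s.2 • G (m - s.1) (t - s.2)

/-- Multiplication of a two-variable family by a Laurent polynomial
`p ∈ ℂ[x₁^{±1}, x₂^{±1}]` (recorded by its finitely supported coefficients). -/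
def mulLPoly (p : (ℤ × ℤ) →₀ ℂ) (G : ℤ → ℤ → W) : ℤ → ℤ → W :=
  fun m t => ∑ d ∈ p.support, p d • G (m - d.1) (t - d.2)

/-- A subset `S ⊆ ℰ(W)` is pseudo-local. -/
def PseudoLocal (S : Set (EW W)) : Prop :=
  ∀ a ∈ S, ∀ b ∈ S, ∃ p : (ℤ × ℤ) →₀ ℂ, p ≠ 0 ∧
    ∃ (r : ℕ) (F : Fin r → (ℕ → ℕ → ℂ)) (g : Fin r → MvPolynomial (Fin 2) ℂ)
      (u v : Fin r → EW W),
      (∀ i, g i ≠ 0) ∧ (∀ i, u i ∈ S) ∧ (∀ i, v i ∈ S) ∧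
      ∀ (w : W) (m t : ℤ),
        mulLPoly p (Fab a b w) m t =
          ∑ i, smulFam (k2Fun (psEmbed (F i) * (polyEmbed (g i))⁻¹))
            (fun m' t' => Fab (u i) (v i) w t' m') m t

/-- The coefficient of `x₁^m x₂^t` in `ι_{x₂,x₁} f(x₂ - x₁)`, for `f(x) ∈ ℂ((x))`. -/
def expandSub (f : LC) : ℤ → ℤ → ℂ :=
  fun m t => if 0 ≤ m then
    ((-1 : ℂ) ^ m.toNat * binom (t + m) m.toNat) * f.coeff (t + m) else 0

/-- A subset `S ⊆ ℰ(W)` is `𝒮`-local. -/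
def SLocal (S : Set (EW W)) : Prop :=
  ∀ a ∈ S, ∀ b ∈ S, ∃ (k : ℕ) (r : ℕ) (f : Fin r → LC) (u v : Fin r → EW W),
    (∀ i, u i ∈ S) ∧ (∀ i, v i ∈ S) ∧
    ∀ (w : W) (m t : ℤ),
      mulPoly ((MvPolynomial.X 0 - MvPolynomial.X 1) ^ k) (Fab a b w) m t =
        ∑ i, mulPoly ((MvPolynomial.X 0 - MvPolynomial.X 1) ^ k)
          (smulFam (expandSub (f i)) (fun m' t' => Fab (u i) (v i) w t' m')) m t

/-- `U` is the nonlocal vertex algebra `⟨S⟩` generated by `S`: the smallest closed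
quasi compatible subspace of `ℰ(W)` containing `S ∪ {1_W}`. -/
def IsGenVA (S : Set (EW W)) (U : Submodule ℂ (EW W)) : Prop :=
  QCSet (U : Set (EW W)) ∧ (∀ a ∈ U, ∀ b ∈ U, ∀ n : ℤ, YE a b n ∈ U) ∧
  oneE ∈ U ∧ S ⊆ U ∧
  ∀ U' : Submodule ℂ (EW W),
    (QCSet (U' : Set (EW W)) ∧ (∀ a ∈ U', ∀ b ∈ U', ∀ n : ℤ, YE a b n ∈ U') ∧
      oneE ∈ U' ∧ S ⊆ (U' : Set (EW W))) → U ≤ U'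

/-! ### 𝒮-locality for maps and weak quantum vertex algebras -/

/-- The `𝒮`-locality identity
`(x₁-x₂)^k Y(u,x₁)Y(v,x₂) = ∑ᵢ (x₁-x₂)^k ι_{x₂,x₁}(fᵢ(x₂-x₁)) Y(vᵢ,x₂)Y(uᵢ,x₁)`
at the level of coefficient families, for mode maps `Ym`. -/
def sLocPair {V : Type*} (Ym : V → W → ℤ → W) (k : ℕ) (u v : V) {r : ℕ}
    (f : Fin r → LC) (vi ui : Fin r → V) : Prop :=
  ∀ (w : W) (m t : ℤ),
    mulPoly ((MvPolynomial.X 0 - MvPolynomial.X 1) ^ k)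
      (fun m' t' => Ym u (Ym v w (-t' - 1)) (-m' - 1)) m t =
    ∑ i, mulPoly ((MvPolynomial.X 0 - MvPolynomial.X 1) ^ k)
      (smulFam (expandSub (f i))
        (fun m' t' => Ym (vi i) (Ym (ui i) w (-m' - 1)) (-t' - 1))) m t

/-- A weak quantum vertex algebra: a nonlocal vertex algebra whose vertex operators
form an `𝒮`-local subspace of `ℰ(V)`. -/
def IsWeakQVA (A : NLVA V) : Prop :=
  ∀ u v : V, ∃ (k : ℕ) (r : ℕ) (f : Fin r → LC) (vi ui : Fin r → V),
    sLocPair (Yf A) k u v f vi ui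

end NVA

namespace NVA

/-!
Quasi compatibility is proved one variable at a time. Call `ψ₁, …, ψ_r` quasi compatible at
`x_i` if for some `q ≠ 0` the product `∏_{j>i} q(x_i,x_j) · ψ₁(x₁)⋯ψ_r(x_r)w` is lower
truncated in `x_i`, uniformly in the other variables. The product of such `q`'s over all `i`
then works for every variable at once, since each row product `∏_{j>i}` divides
`∏_{i<j} p(x_i,x_j)`. At `x_i` with `i > 1` this reduces to the shorter sequence `ψ₂, …, ψ_r`.
At `x₁`, pseudo-locality rewrites `p(x₁,x₂)ψ₁(x₁)ψ₂(x₂)` as `Σₛ ι(cₛ) uₛ(x₂)vₛ(x₁)`. By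
induction on `r`, `vₛ(x₁)ψ₃(x₃)⋯ψ_r(x_r)w` becomes truncated in `x₁` after multiplication by a
polynomial in `x₁, x₃, …, x_r`; that polynomial commutes past `uₛ(x₂)` and `ι(cₛ)`, and the
orders of the series `ι(cₛ)` in `x₁` are bounded below.
-/

section

open MvPolynomial

variable {W : Type*} [AddCommGroup W] [Module ℂ W]

lemma mf_zero (a : EW W) (m : ℤ) : mf a 0 m = 0 := by
  simp [mf]

lemma mf_smul (a : EW W) (c : ℂ) (v : W) (m : ℤ) : mf a (c • v) m = c • mf a v m := by
  simp [mf]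

lemma mf_sum {ι : Type*} (a : EW W) (s : Finset ι) (f : ι → W) (m : ℤ) :
    mf a (∑ i ∈ s, f i) m = ∑ i ∈ s, mf a (f i) m := by
  simp [mf, map_sum]

lemma exists_mf_eq_zero (a : EW W) (v : W) : ∃ N : ℤ, ∀ n, N ≤ n → mf a v n = 0 := a.2 v

section MulPolyN

variable {n : ℕ}

lemma mulPolyN_eq_sum_of_support_subset {P : MvPolynomial (Fin n) ℂ} {s : Finset (Fin n →₀ ℕ)}
    (hs : P.support ⊆ s) (F : (Fin n → ℤ) → W) (k : Fin n → ℤ) :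
    mulPolyN P F k = ∑ d ∈ s, coeff d P • F (fun i => k i - d i) :=
  Finset.sum_subset hs fun d _ hd => by rw [notMem_support_iff.mp hd, zero_smul]

lemma mulPolyN_add (P Q : MvPolynomial (Fin n) ℂ) (F : (Fin n → ℤ) → W) (k : Fin n → ℤ) :
    mulPolyN (P + Q) F k = mulPolyN P F k + mulPolyN Q F k := by
  classical
  rw [mulPolyN_eq_sum_of_support_subset support_add,
    mulPolyN_eq_sum_of_support_subset (P := P) Finset.subset_union_left,
    mulPolyN_eq_sum_of_support_subset (P := Q) Finset.subset_union_right,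
    ← Finset.sum_add_distrib]
  simp only [coeff_add, add_smul]

lemma mulPolyN_zero (F : (Fin n → ℤ) → W) (k : Fin n → ℤ) :
    mulPolyN (0 : MvPolynomial (Fin n) ℂ) F k = 0 := by
  simp [mulPolyN]

lemma mulPolyN_sum {ι : Type*} (s : Finset ι) (P : ι → MvPolynomial (Fin n) ℂ)
    (F : (Fin n → ℤ) → W) (k : Fin n → ℤ) :
    mulPolyN (∑ i ∈ s, P i) F k = ∑ i ∈ s, mulPolyN (P i) F k := by
  classical
  induction s using Finset.induction_on with
  | empty => simp [mulPolyN_zero]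
  | insert i s hi ih => rw [Finset.sum_insert hi, Finset.sum_insert hi, mulPolyN_add, ih]

lemma mulPolyN_monomial (d : Fin n →₀ ℕ) (c : ℂ) (F : (Fin n → ℤ) → W) (k : Fin n → ℤ) :
    mulPolyN (monomial d c) F k = c • F (fun i => k i - d i) := by
  classical
  rw [mulPolyN_eq_sum_of_support_subset support_monomial_subset, Finset.sum_singleton,
    coeff_monomial, if_pos rfl]

lemma mulPolyN_one (F : (Fin n → ℤ) → W) (k : Fin n → ℤ) : mulPolyN 1 F k = F k := by
  rw [one_def, mulPolyN_monomial, one_smul]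
  simp

lemma mulPolyN_mul (P Q : MvPolynomial (Fin n) ℂ) (F : (Fin n → ℤ) → W) (k : Fin n → ℤ) :
    mulPolyN (P * Q) F k = mulPolyN P (mulPolyN Q F) k := by
  induction P using MvPolynomial.induction_on' with
  | monomial d c =>
    induction Q using MvPolynomial.induction_on' with
    | monomial e c' =>
      rw [monomial_mul, mulPolyN_monomial, mulPolyN_monomial, mulPolyN_monomial, smul_smul]
      congr 2 with i
      simp only [Finsupp.coe_add, Pi.add_apply, Nat.cast_add]
      ring
    | add Q Q' hQ hQ' =>
      simp only [mul_add, mulPolyN_add, hQ, hQ', mulPolyN_monomial, smul_add]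
  | add P P' hP hP' => rw [add_mul, mulPolyN_add, mulPolyN_add, hP, hP']

lemma mulPolyN_smul (P : MvPolynomial (Fin n) ℂ) (c : ℂ) (F : (Fin n → ℤ) → W)
    (k : Fin n → ℤ) : mulPolyN P (fun k => c • F k) k = c • mulPolyN P F k := by
  simp only [mulPolyN, Finset.smul_sum, smul_comm c]

lemma mulPolyN_mf (P : MvPolynomial (Fin n) ℂ) (a : EW W) (m : ℤ) (F : (Fin n → ℤ) → W)
    (k : Fin n → ℤ) : mulPolyN P (fun k => mf a (F k) m) k = mf a (mulPolyN P F k) m := by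
  simp only [mulPolyN, mf_sum, mf_smul]

lemma mulPolyN_comp_add (P : MvPolynomial (Fin n) ℂ) (F : (Fin n → ℤ) → W)
    (v k : Fin n → ℤ) : mulPolyN P (fun k => F (k + v)) k = mulPolyN P F (k + v) := by
  refine Finset.sum_congr rfl fun d _ => congrArg _ (congrArg F ?_)
  ext i
  simp only [Pi.add_apply]
  ring

lemma mulPolyN_finset_sum {ι : Type*} (P : MvPolynomial (Fin n) ℂ) (s : Finset ι)
    (F : ι → (Fin n → ℤ) → W) (k : Fin n → ℤ) :
    mulPolyN P (fun k => ∑ i ∈ s, F i k) k = ∑ i ∈ s, mulPolyN P (F i) k := by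
  simp only [mulPolyN, Finset.smul_sum]
  exact Finset.sum_comm

lemma mulPolyN_finsum {ι : Type*} (P : MvPolynomial (Fin n) ℂ) (F : ι → (Fin n → ℤ) → W)
    (hF : ∀ k, (Function.support fun i => F i k).Finite) (k : Fin n → ℤ) :
    mulPolyN P (fun k => ∑ᶠ i, F i k) k = ∑ᶠ i, mulPolyN P (F i) k := by
  simp only [mulPolyN, smul_finsum]
  exact sum_finsum_comm _ _ fun _ _ => (hF _).subset (Function.support_const_smul_subset _ _)

lemma mulPolyN_rename_succAbove (p : Fin (n + 1)) (Q : MvPolynomial (Fin n) ℂ)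
    (F : (Fin (n + 1) → ℤ) → W) (k : Fin (n + 1) → ℤ) :
    mulPolyN (rename p.succAbove Q) F k =
      mulPolyN Q (fun k' => F (p.insertNth (k p) k')) (p.removeNth k) := by
  induction Q using MvPolynomial.induction_on' with
  | monomial d c =>
    rw [rename_monomial, mulPolyN_monomial, mulPolyN_monomial]
    congr 2 with i
    induction i using p.succAboveCases with
    | x => simp [Finsupp.mapDomain_of_notMem_range _ _ (fun ⟨j, hj⟩ => Fin.succAbove_ne p j hj)]
    | p j => simp [Finsupp.mapDomain_apply (Fin.succAbove_right_injective), Fin.removeNth]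
  | add Q Q' hQ hQ' => rw [map_add, mulPolyN_add, mulPolyN_add, hQ, hQ']

end MulPolyN

section Truncation

variable {n : ℕ}

def TruncAt (i : Fin n) (N : ℤ) (F : (Fin n → ℤ) → W) : Prop :=
  ∀ k, k i < N → F k = 0

lemma truncAt_mulPolyN {i : Fin n} {N : ℤ} {F : (Fin n → ℤ) → W} (h : TruncAt i N F)
    (P : MvPolynomial (Fin n) ℂ) : TruncAt i N (mulPolyN P F) := fun k hk =>
  Finset.sum_eq_zero fun d _ => by rw [h _ (show k i - (d i : ℤ) < N by omega), smul_zero]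

lemma truncAt_mulPolyN_of_dvd {i : Fin n} {N : ℤ} {F : (Fin n → ℤ) → W}
    {P Q : MvPolynomial (Fin n) ℂ} (h : TruncAt i N (mulPolyN P F)) (hPQ : P ∣ Q) :
    TruncAt i N (mulPolyN Q F) := by
  obtain ⟨R, rfl⟩ := hPQ
  intro k hk
  rw [mul_comm, mulPolyN_mul]
  exact truncAt_mulPolyN h R k hk

end Truncation

section PairPolyRow

variable {n : ℕ}

def pairPolyRow (i : Fin n) (q : MvPolynomial (Fin 2) ℂ) : MvPolynomial (Fin n) ℂ :=
  ∏ j ∈ Finset.Ioi i, rename ![i, j] q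

lemma pairPolyRow_dvd_pairPolyRow (i : Fin n) {q q' : MvPolynomial (Fin 2) ℂ} (h : q ∣ q') :
    pairPolyRow i q ∣ pairPolyRow i q' :=
  Finset.prod_dvd_prod_of_dvd _ _ fun _ _ => map_dvd _ h

lemma pairPolyRow_dvd_pairPoly (q : MvPolynomial (Fin 2) ℂ) (i : Fin n) :
    pairPolyRow i q ∣ pairPoly q n := by
  let row : Fin n ↪ Fin n × Fin n := ⟨fun j => (i, j), fun _ _ h => (Prod.ext_iff.mp h).2⟩
  have hrow : pairPolyRow i q = ∏ ij ∈ (Finset.Ioi i).map row, rename ![ij.1, ij.2] q := by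
    rw [Finset.prod_map]
    rfl
  rw [hrow, pairPoly]
  refine Finset.prod_dvd_prod_of_subset _ _ _ fun ij hij => ?_
  obtain ⟨j, hj, rfl⟩ := Finset.mem_map.mp hij
  exact Finset.mem_filter.mpr ⟨Finset.mem_univ _, Finset.mem_Ioi.mp hj⟩

lemma pairPolyRow_succ (j : Fin n) (q : MvPolynomial (Fin 2) ℂ) :
    pairPolyRow j.succ q = rename Fin.succ (pairPolyRow j q) := by
  rw [pairPolyRow, pairPolyRow, map_prod, ← Fin.map_succEmb_Ioi, Finset.prod_map]
  refine Finset.prod_congr rfl fun j' _ => ?_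
  rw [rename_rename]
  refine congrArg (rename · q) (funext fun a => ?_)
  fin_cases a <;> rfl

lemma pairPolyRow_zero (q : MvPolynomial (Fin 2) ℂ) :
    pairPolyRow (0 : Fin (n + 2)) q =
      rename ![0, 1] q * rename (Fin.succAbove 1) (pairPolyRow 0 q) := by
  rw [pairPolyRow, pairPolyRow, map_prod, Fin.prod_Ioi_zero, Fin.prod_Ioi_zero,
    Fin.prod_univ_succ]
  congr 1
  refine Finset.prod_congr rfl fun j _ => ?_
  rw [rename_rename]
  refine congrArg (rename · q) (funext fun a => ?_)
  fin_cases a <;> simp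

end PairPolyRow

section QCSeqAt

variable {n : ℕ}

def QCSeqAt (ψ : Fin n → EW W) (i : Fin n) : Prop :=
  ∃ q : MvPolynomial (Fin 2) ℂ, q ≠ 0 ∧
    ∀ w, ∃ M, TruncAt i M (mulPolyN (pairPolyRow i q) (seqCoeff ψ w))

lemma seqCoeff_cons (a : EW W) (ψ : Fin n → EW W) (w : W) (m : ℤ) (k : Fin n → ℤ) :
    seqCoeff (Fin.cons a ψ) w (Fin.cons m k) = mf a (seqCoeff ψ w k) (-m - 1) := by
  simp [seqCoeff]

lemma mulPolyN_rename_succ_seqCoeff (P : MvPolynomial (Fin n) ℂ) (ψ : Fin (n + 1) → EW W)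
    (w : W) (k : Fin (n + 1) → ℤ) :
    mulPolyN (rename Fin.succ P) (seqCoeff ψ w) k =
      mf (ψ 0) (mulPolyN P (seqCoeff (Fin.tail ψ) w) (Fin.tail k)) (-(k 0) - 1) := by
  rw [← Fin.succAbove_zero, mulPolyN_rename_succAbove, ← mulPolyN_mf]
  simp [Fin.insertNth_zero', seqCoeff]

lemma QCSeqAt.succ {ψ : Fin (n + 1) → EW W} {j : Fin n} (h : QCSeqAt (Fin.tail ψ) j) :
    QCSeqAt ψ j.succ := by
  obtain ⟨q, hq, hM⟩ := h
  refine ⟨q, hq, fun w => ?_⟩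
  obtain ⟨M, hM⟩ := hM w
  refine ⟨M, fun k hk => ?_⟩
  rw [pairPolyRow_succ, mulPolyN_rename_succ_seqCoeff, hM _ hk, mf_zero]

lemma qcSeqAt_zero_of_fin_one (ψ : Fin 1 → EW W) : QCSeqAt ψ 0 := by
  refine ⟨1, one_ne_zero, fun w => ?_⟩
  obtain ⟨N, hN⟩ := exists_mf_eq_zero (ψ 0) w
  refine ⟨-N, fun k hk => ?_⟩
  have hrow : pairPolyRow (0 : Fin 1) 1 = 1 := Finset.prod_eq_one fun _ _ => map_one _
  rw [hrow, mulPolyN_one]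
  exact hN _ (by omega)

lemma qcSeq_of_forall_qcSeqAt {ψ : Fin n → EW W} (h : ∀ i, QCSeqAt ψ i) : QCSeq ψ := by
  choose q hq hM using h
  refine ⟨∏ i, q i, Finset.prod_ne_zero_iff.mpr fun i _ => hq i, fun w => ?_⟩
  choose M hM using fun i => hM i w
  obtain ⟨N, hN⟩ := (Set.finite_range M).bddBelow
  refine ⟨N, fun k ⟨i, hi⟩ => ?_⟩
  have hdvd : pairPolyRow i (q i) ∣ pairPoly (∏ i, q i) n :=
    (pairPolyRow_dvd_pairPolyRow i (Finset.dvd_prod_of_mem q (Finset.mem_univ i))).trans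
      (pairPolyRow_dvd_pairPoly _ i)
  exact truncAt_mulPolyN_of_dvd (hM i) hdvd k (hi.trans_le (hN ⟨i, rfl⟩))

end QCSeqAt

def shiftedExponent (K : ℕ) (e : ℤ × ℤ) : Fin 2 →₀ ℕ :=
  Finsupp.single 0 (e.1 + K).toNat + Finsupp.single 1 (e.2 + K).toNat

/-- Multiplying a nonzero Laurent polynomial by a monomial `x₁^K x₂^K` turns it into a nonzero
polynomial. -/
lemma exists_mulPolyN_rename_eq_mulLPoly {pL : (ℤ × ℤ) →₀ ℂ} (hpL : pL ≠ 0) :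
    ∃ P : MvPolynomial (Fin 2) ℂ, P ≠ 0 ∧ ∃ K : ℤ, ∀ {r : ℕ} (F : (Fin (r + 2) → ℤ) → W)
      (m t : ℤ) (rest : Fin r → ℤ),
      mulPolyN (rename ![0, 1] P) F (Fin.cons m (Fin.cons t rest)) =
        mulLPoly pL (fun m' t' => F (Fin.cons m' (Fin.cons t' rest))) (m - K) (t - K) := by
  obtain ⟨K, hK⟩ : ∃ K : ℕ, ∀ e ∈ pL.support, e.1.natAbs + e.2.natAbs ≤ K :=
    ⟨_, fun e he => Finset.single_le_sum (f := fun e : ℤ × ℤ => e.1.natAbs + e.2.natAbs)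
      (fun _ _ => Nat.zero_le _) he⟩
  have hinj : Set.InjOn (shiftedExponent K) pL.support := by
    intro e he e' he' h
    have h0 := congrArg (· 0) h
    have h1 := congrArg (· 1) h
    have := hK e he
    have := hK e' he'
    simp only [shiftedExponent, Finsupp.add_apply, Finsupp.single_apply] at h0 h1
    norm_num at h0 h1
    exact Prod.ext (by omega) (by omega)
  refine ⟨∑ e ∈ pL.support, monomial (shiftedExponent K e) (pL e), ?_, K, ?_⟩
  · obtain ⟨e₀, he₀⟩ := Finsupp.support_nonempty_iff.mpr hpL
    intro h0
    have hcoeff := congrArg (coeff (shiftedExponent K e₀)) h0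
    rw [coeff_sum, Finset.sum_eq_single e₀, coeff_monomial, if_pos rfl, coeff_zero] at hcoeff
    · exact Finsupp.mem_support_iff.mp he₀ hcoeff
    · intro e he hne
      rw [coeff_monomial, if_neg fun h => hne (hinj he he₀ h)]
    · exact fun h => absurd he₀ h
  · intro r F m t rest
    rw [map_sum, mulPolyN_sum, mulLPoly]
    refine Finset.sum_congr rfl fun e he => ?_
    rw [rename_monomial, mulPolyN_monomial]
    congr 1
    refine congrArg F (funext fun i => ?_)
    have := hK e he
    refine Fin.cases ?_ (Fin.cases ?_ fun j => ?_) i <;>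
      simp [shiftedExponent, Finsupp.mapDomain_add, Fin.succ_succ_ne_one] <;>
      omega

lemma finite_support_k2Fun_smul (x : K2) (f : ℤ → ℤ → W)
    (h₁ : ∃ N, ∀ σ₁ σ₂, N ≤ σ₁ → f σ₁ σ₂ = 0) (h₂ : ∀ σ₁, ∃ N, ∀ σ₂, N ≤ σ₂ → f σ₁ σ₂ = 0) :
    (Function.support fun σ : ℤ × ℤ => k2Fun x σ.1 σ.2 • f σ.1 σ.2).Finite := by
  obtain ⟨N₁, hN₁⟩ := h₁
  choose N₂ hN₂ using h₂
  refine ((Set.finite_Ico x.order N₁).biUnion fun σ₁ _ =>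
    (Set.finite_singleton σ₁).prod (Set.finite_Ico (x.coeff σ₁).order (N₂ σ₁))).subset ?_
  rintro ⟨σ₁, σ₂⟩ hσ
  have hc : (x.coeff σ₁).coeff σ₂ ≠ 0 := left_ne_zero_of_smul hσ
  have hf : f σ₁ σ₂ ≠ 0 := right_ne_zero_of_smul hσ
  have hx : x.coeff σ₁ ≠ 0 := fun h => hc (by rw [h, HahnSeries.coeff_zero])
  refine Set.mem_biUnion (x := σ₁) ⟨HahnSeries.order_le_of_coeff_ne_zero hx, ?_⟩ ⟨rfl, ?_, ?_⟩
  · exact not_le.mp fun h => hf (hN₁ _ _ h)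
  · exact HahnSeries.order_le_of_coeff_ne_zero hc
  · exact not_le.mp fun h => hf (hN₂ _ _ h)

lemma insertNth_one_eq_cons {α : Type*} {r : ℕ} (t : α) (k : Fin (r + 1) → α) :
    Fin.insertNth (1 : Fin (r + 2)) t k =
      Fin.cons (α := fun _ => α) (k 0) (Fin.cons t (Fin.tail k)) := by
  rw [← Fin.succ_zero_eq_one, ← Fin.cons_self_tail k, Fin.insertNth_succ_cons,
    Fin.insertNth_zero']
  simp

lemma add_cons_zero {r : ℕ} (k : Fin (r + 1) → ℤ) (a : ℤ) :
    k + Fin.cons a 0 = Fin.cons (k 0 + a) (Fin.tail k) := by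
  ext i
  induction i using Fin.cases <;> simp [Fin.tail]

/-- `B` does not involve `x₂`, so it commutes with the expansion `Σₛ ι(cₛ) uₛ(x₂) Φₛ(x₁, x₃, …)`;
as the `x₁`-orders of the `cₛ` are bounded below, truncation of each `B Φₛ` in `x₁` passes to
the expansion. -/
lemma truncAt_zero_mulPolyN_rename_succAbove_one {ι : Type*} [Fintype ι] {r : ℕ}
    (B : MvPolynomial (Fin (r + 1)) ℂ) (G : (Fin (r + 2) → ℤ) → W) (c : ι → K2)
    (u : ι → EW W) (Φ : ι → (Fin (r + 1) → ℤ) → W) (K : ℤ)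
    (hG : ∀ m t rest, G (Fin.cons m (Fin.cons t rest)) = ∑ s, ∑ᶠ σ : ℤ × ℤ,
      k2Fun (c s) σ.1 σ.2 • mf (u s) (Φ s (Fin.cons (m - K - σ.1) rest)) (-(t - K - σ.2) - 1))
    (hfin : ∀ s m t rest, (Function.support fun σ : ℤ × ℤ =>
      k2Fun (c s) σ.1 σ.2 • mf (u s) (Φ s (Fin.cons (m - K - σ.1) rest))
        (-(t - K - σ.2) - 1)).Finite)
    {M : ι → ℤ} (hΦ : ∀ s, TruncAt 0 (M s) (mulPolyN B (Φ s)))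
    {M₀ : ℤ} (hM₀ : ∀ s, M₀ ≤ (c s).order + K + M s) :
    TruncAt 0 M₀ (mulPolyN (rename (Fin.succAbove 1) B) G) := by
  intro k hk
  set T : ι → ℤ × ℤ → (Fin (r + 1) → ℤ) → W := fun s σ k' =>
    k2Fun (c s) σ.1 σ.2 • mf (u s) (Φ s (k' + Fin.cons (-K - σ.1) 0)) (-(k 1 - K - σ.2) - 1)
  have hGT : ∀ k', G (Fin.insertNth 1 (k 1) k') = ∑ s, ∑ᶠ σ, T s σ k' := fun k' => by
    simp only [T, insertNth_one_eq_cons, hG, add_cons_zero, sub_eq_add_neg, add_assoc]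
  have hTfin : ∀ s k', (Function.support fun σ => T s σ k').Finite := fun s k' => by
    simpa only [T, add_cons_zero, sub_eq_add_neg, add_assoc] using
      hfin s (k' 0) (k 1) (Fin.tail k')
  rw [mulPolyN_rename_succAbove, funext hGT, mulPolyN_finset_sum]
  refine Finset.sum_eq_zero fun s _ => ?_
  rw [mulPolyN_finsum _ _ (hTfin s)]
  refine finsum_eq_zero_of_forall_eq_zero fun σ => ?_
  simp only [T, mulPolyN_smul, mulPolyN_mf, mulPolyN_comp_add]
  rcases lt_or_ge σ.1 (c s).order with hσ | hσ
  · rw [k2Fun, HahnSeries.coeff_eq_zero_of_lt_order hσ, HahnSeries.coeff_zero, zero_smul]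
  · rw [hΦ s _ (by simp [Fin.removeNth]; linarith [hM₀ s]), mf_zero, smul_zero]

lemma QCSeqAt.cons_cons {ι : Type*} [Fintype ι] {r : ℕ} {a b : EW W} {χ : Fin r → EW W}
    {pL : (ℤ × ℤ) →₀ ℂ} (hpL : pL ≠ 0) {c : ι → K2} {u v : ι → EW W}
    (hrel : ∀ w m t, mulLPoly pL (Fab a b w) m t =
      ∑ s, smulFam (k2Fun (c s)) (fun m' t' => Fab (u s) (v s) w t' m') m t)
    (hv : ∀ s, QCSeqAt (Fin.cons (v s) χ : Fin (r + 1) → EW W) 0) :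
    QCSeqAt (Fin.cons a (Fin.cons b χ) : Fin (r + 2) → EW W) 0 := by
  obtain ⟨P, hP, K, hPK⟩ := exists_mulPolyN_rename_eq_mulLPoly (W := W) hpL
  choose q hq hqM using hv
  set Q := ∏ s, q s
  refine ⟨P * Q, mul_ne_zero hP (Finset.prod_ne_zero_iff.mpr fun s _ => hq s), fun w => ?_⟩
  choose M hM using fun s => hqM s w
  obtain ⟨M₀, hM₀⟩ := (Set.finite_range fun s => (c s).order + K + M s).bddBelow
  have hdvd : rename (Fin.succAbove 1) (pairPolyRow 0 Q) * rename ![0, 1] P ∣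
      pairPolyRow (0 : Fin (r + 2)) (P * Q) := by
    rw [pairPolyRow_zero, mul_comm]
    exact mul_dvd_mul (map_dvd _ (dvd_mul_right P Q))
      (map_dvd _ (pairPolyRow_dvd_pairPolyRow (0 : Fin (r + 1)) (dvd_mul_left Q P)))
  refine ⟨M₀, truncAt_mulPolyN_of_dvd (fun k hk => ?_) hdvd⟩
  rw [mulPolyN_mul]
  refine truncAt_zero_mulPolyN_rename_succAbove_one _ _ c u
    (fun s => seqCoeff (Fin.cons (v s) χ) w) K (fun m t rest => ?_) (fun s m t rest => ?_)
    (fun s => truncAt_mulPolyN_of_dvd (hM s)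
      (pairPolyRow_dvd_pairPolyRow 0 (Finset.dvd_prod_of_mem q (Finset.mem_univ s))))
    (fun s => hM₀ ⟨s, rfl⟩) k hk
  · rw [hPK]
    simp only [seqCoeff_cons]
    exact hrel (seqCoeff χ w rest) (m - K) (t - K)
  · simp only [seqCoeff_cons]
    obtain ⟨N₁, hN₁⟩ := exists_mf_eq_zero (v s) (seqCoeff χ w rest)
    refine finite_support_k2Fun_smul (c s)
      (fun σ₁ σ₂ =>
        mf (u s) (mf (v s) (seqCoeff χ w rest) (-(m - K - σ₁) - 1)) (-(t - K - σ₂) - 1))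
      ⟨N₁ + m - K + 1, fun σ₁ σ₂ h => ?_⟩ fun σ₁ => ?_
    · simp only [hN₁ _ (show N₁ ≤ -(m - K - σ₁) - 1 by omega), mf_zero]
    · obtain ⟨N₂, hN₂⟩ :=
        exists_mf_eq_zero (u s) (mf (v s) (seqCoeff χ w rest) (-(m - K - σ₁) - 1))
      exact ⟨N₂ + t - K + 1, fun σ₂ h => hN₂ _ (by omega)⟩

lemma qcSeqAt_zero_of_pseudoLocal {U : Set (EW W)} (hU : PseudoLocal U) :
    ∀ {r : ℕ} (ψ : Fin (r + 1) → EW W), (∀ i, ψ i ∈ U) → QCSeqAt ψ 0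
  | 0, ψ, _ => qcSeqAt_zero_of_fin_one ψ
  | r + 1, ψ, hψ => by
    obtain ⟨pL, hpL, _, _, _, u, v, -, -, hv, hrel⟩ := hU (ψ 0) (hψ 0) (ψ 1) (hψ 1)
    have hχ : ∀ s i, (Fin.cons (v s) (Fin.tail (Fin.tail ψ)) : Fin (r + 1) → EW W) i ∈ U :=
      fun s i => Fin.cases (hv s) (fun _ => hψ _) i
    rw [← Fin.cons_self_tail ψ, ← Fin.cons_self_tail (Fin.tail ψ)]
    exact QCSeqAt.cons_cons hpL hrel fun s => qcSeqAt_zero_of_pseudoLocal hU _ (hχ s)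

lemma qcSeqAt_of_pseudoLocal {U : Set (EW W)} (hU : PseudoLocal U) :
    ∀ {r : ℕ} (ψ : Fin r → EW W), (∀ i, ψ i ∈ U) → ∀ i, QCSeqAt ψ i
  | _ + 1, ψ, hψ, i => Fin.cases (qcSeqAt_zero_of_pseudoLocal hU ψ hψ)
      (fun j => (qcSeqAt_of_pseudoLocal hU (Fin.tail ψ) (fun j => hψ j.succ) j).succ) i

end

/-- cf. Lemma 3.2 / `lpracticalcase`.  Every pseudo-local subset
of `ℰ(W)` is quasi compatible. -/
theorem statement10 {W : Type*} [AddCommGroup W] [Module ℂ W]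
    (U : Set (EW W)) (hU : PseudoLocal U) : QCSet U :=
  fun _ ψ hψ => qcSeq_of_forall_qcSeqAt (qcSeqAt_of_pseudoLocal hU ψ hψ)

end NVA
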